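/- Let S = ⟨s_1, …, s_r⟩ ≤ P_n be a stabilizer group of rank r, k = n − r, and let p be a Hermitian Pauli that anticommutes with s_1 and commutes with s_2, …, s_r. Suppose N(S)/S = ⟨ī, x̄_1, z̄_1, …, x̄_k, z̄_k⟩ is a presentation in which ī ↦ i, x̄_j ↦ X_j, z̄_j ↦ Z_j extends to an isomorphism N(S)/S ≅ P_k, and whose representatives x_1, z_1, …, x_k, z_k all commute with p. Set S' = ⟨p, s_2, …, s_r⟩. Then S' is a stabilizer group of rank r, each representative x_j, z_j lies in N(S'), their cosets modulo S' together with the coset of i·I are independent generators of N(S')/S', and the same assignment extends to an isomorphism N(S')/S' ≅ P_k. -/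

import Mathlib

open Matrix

noncomputable section

/-- The space of operators on `ι`-many qubits: matrices whose rows and columns are
indexed by bit strings `ι → Fin 2`, with complex entries. -/
abbrev PMat (ι : Type) [Fintype ι] [DecidableEq ι] : Type :=
  Matrix (ι → Fin 2) (ι → Fin 2) ℂ

variable (ι : Type) [Fintype ι] [DecidableEq ι]

lemma fin2_add_one_add_one : ∀ a : Fin 2, a + 1 + 1 = a := by decide

/-- The matrix of the operator `X k`, which flips the `k`-th bit of a basis state. -/
def XMat (k : ι) : PMat ι :=
  Matrix.of fun x y => if y = Function.update x k (x k + 1) then (1 : ℂ) else 0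

/-- The matrix of the operator `Z k`, which multiplies the basis state `x` by `(-1) ^ (x k)`. -/
def ZMat (k : ι) : PMat ι :=
  Matrix.diagonal fun x => (-1 : ℂ) ^ (x k : ℕ)

lemma XMat_mul_self (k : ι) : XMat ι k * XMat ι k = 1 := by
  have hinv : ∀ x : ι → Fin 2,
      Function.update (Function.update x k (x k + 1)) k
        (Function.update x k (x k + 1) k + 1) = x := by
    intro x
    ext j
    rcases eq_or_ne j k with rfl | h
    · simp [fin2_add_one_add_one]
    · simp [Function.update_of_ne h]
  ext x z
  rw [Matrix.mul_apply]
  simp only [XMat, Matrix.of_apply, ite_mul, one_mul, zero_mul]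
  rw [Finset.sum_ite_eq' Finset.univ (Function.update x k (x k + 1))
    (fun y => if z = Function.update y k (y k + 1) then (1 : ℂ) else 0)]
  simp [Matrix.one_apply, fin2_add_one_add_one, Function.update_eq_self, eq_comm]

lemma ZMat_mul_self (k : ι) : ZMat ι k * ZMat ι k = 1 := by
  have h : (fun i : ι → Fin 2 => (-1 : ℂ) ^ (i k : ℕ) * (-1) ^ (i k : ℕ)) = fun _ => 1 := by
    funext x
    rw [← pow_add, ← two_mul, pow_mul, neg_one_sq, one_pow]
  rw [ZMat, Matrix.diagonal_mul_diagonal, h, Matrix.diagonal_one]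

lemma iMat_mul : (Complex.I • (1 : PMat ι)) * ((-Complex.I) • (1 : PMat ι)) = 1 := by
  rw [smul_mul_smul_comm]
  simp [Complex.I_mul_I]

lemma iMat_mul' : ((-Complex.I) • (1 : PMat ι)) * (Complex.I • (1 : PMat ι)) = 1 := by
  rw [smul_mul_smul_comm]
  simp [Complex.I_mul_I]

/-- The scalar `i·I`, as a unit. -/
def iU : (PMat ι)ˣ := ⟨Complex.I • 1, (-Complex.I) • 1, iMat_mul ι, iMat_mul' ι⟩

/-- The operator `X k`, as a unit. -/
def XU (k : ι) : (PMat ι)ˣ := ⟨XMat ι k, XMat ι k, XMat_mul_self ι k, XMat_mul_self ι k⟩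

/-- The operator `Z k`, as a unit. -/
def ZU (k : ι) : (PMat ι)ˣ := ⟨ZMat ι k, ZMat ι k, ZMat_mul_self ι k, ZMat_mul_self ι k⟩

/-- The Pauli group on the qubits indexed by `ι`: the subgroup of invertible operators
generated by `i·I` and the `X k` and `Z k`. -/
def PauliGroup : Subgroup (PMat ι)ˣ :=
  Subgroup.closure ({iU ι} ∪ Set.range (XU ι) ∪ Set.range (ZU ι))

/-- The phase-free "almost Pauli group" `⟨X 1, Z 1, …, X n, Z n⟩`. -/
def PauliGroupNP : Subgroup (PMat ι)ˣ :=
  Subgroup.closure (Set.range (XU ι) ∪ Set.range (ZU ι))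

lemma iU_mem : iU ι ∈ PauliGroup ι :=
  Subgroup.subset_closure (Or.inl (Or.inl rfl))

lemma XU_mem (k : ι) : XU ι k ∈ PauliGroup ι :=
  Subgroup.subset_closure (Or.inl (Or.inr ⟨k, rfl⟩))

lemma ZU_mem (k : ι) : ZU ι k ∈ PauliGroup ι :=
  Subgroup.subset_closure (Or.inr ⟨k, rfl⟩)

lemma XU_memNP (k : ι) : XU ι k ∈ PauliGroupNP ι :=
  Subgroup.subset_closure (Or.inl ⟨k, rfl⟩)

lemma ZU_memNP (k : ι) : ZU ι k ∈ PauliGroupNP ι :=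
  Subgroup.subset_closure (Or.inr ⟨k, rfl⟩)

/-- A stabilizer group: a subgroup of the Pauli group not containing `-I`. -/
structure IsStabilizer (S : Subgroup (PMat ι)ˣ) : Prop where
  le : S ≤ PauliGroup ι
  neg_one_notMem : (-1 : (PMat ι)ˣ) ∉ S

/-- A subgroup has rank `r` if it admits a generating set of size `r` and no smaller one. -/
def HasRank {G : Type*} [Group G] (S : Subgroup G) (r : ℕ) : Prop :=
  (∃ T : Finset G, Subgroup.closure (T : Set G) = S ∧ T.card = r) ∧
    ∀ T : Finset G, Subgroup.closure (T : Set G) = S → r ≤ T.card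

/-- The normalizer `N(S) = {p ∈ P_n : p S p⁻¹ = S}` of `S` in the Pauli group. -/
def NormIn (S : Subgroup (PMat ι)ˣ) : Subgroup (PMat ι)ˣ :=
  Subgroup.normalizer (S : Set (PMat ι)ˣ) ⊓ PauliGroup ι

/-- The centralizer `C(S) = {p ∈ P_n : ∀ s ∈ S, p s = s p}` of `S` in the Pauli group. -/
def CentIn (S : Subgroup (PMat ι)ˣ) : Subgroup (PMat ι)ˣ :=
  Subgroup.centralizer (S : Set (PMat ι)ˣ) ⊓ PauliGroup ι

instance normIn_normal (S : Subgroup (PMat ι)ˣ) : (S.subgroupOf (NormIn ι S)).Normal := by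
  constructor
  intro x hx g
  rw [Subgroup.mem_subgroupOf] at hx ⊢
  have hg : (g : (PMat ι)ˣ) ∈ Subgroup.normalizer (S : Set (PMat ι)ˣ) := (Subgroup.mem_inf.mp g.2).1
  have h := (Subgroup.mem_normalizer_iff.mp hg (x : (PMat ι)ˣ)).mp hx
  simpa using h

/-- The logical Pauli group `N(S)/S`. -/
abbrev LogicalGroup (S : Subgroup (PMat ι)ˣ) :=
  ↥(NormIn ι S) ⧸ S.subgroupOf (NormIn ι S)

/-- A Pauli is Hermitian if its matrix equals its conjugate transpose. -/
def IsHermitianPauli (p : (PMat ι)ˣ) : Prop := (p : PMat ι).IsHermitian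

/-- The weight of a Pauli: the number of qubits on which it acts non-trivially,
i.e. on which it fails to commute with `X k` or with `Z k`. -/
def weight (p : (PMat ι)ˣ) : ℕ :=
  Nat.card {k : ι // ¬(Commute p (XU ι k) ∧ Commute p (ZU ι k))}

/-- The effect on a stabilizer group of measuring the Hermitian Pauli `p`,
post-selecting the outcome `+1`: `S ↦ ⟨p⟩·(S ∩ C(p))`. -/
def measUpdate (p : (PMat ι)ˣ) (S : Subgroup (PMat ι)ˣ) : Subgroup (PMat ι)ˣ :=
  Subgroup.closure {p} ⊔ (S ⊓ Subgroup.centralizer {p})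

lemma iU_central (A : (PMat ι)ˣ) : iU ι * A = A * iU ι := by
  apply Units.ext
  show (Complex.I • (1 : PMat ι)) * (A : PMat ι) = (A : PMat ι) * (Complex.I • 1)
  rw [smul_mul_assoc, one_mul, mul_smul_comm, mul_one]

lemma iU_mem_normIn (S : Subgroup (PMat ι)ˣ) : iU ι ∈ NormIn ι S := by
  refine Subgroup.mem_inf.mpr ⟨?_, iU_mem ι⟩
  rw [Subgroup.mem_normalizer_iff]
  intro h
  have : iU ι * h * (iU ι)⁻¹ = h := by
    rw [iU_central ι h, mul_assoc, mul_inv_cancel, mul_one]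
  rw [this]



/-! ### Auxiliary structural lemmas about the Pauli group -/

section Aux
set_option linter.unusedSectionVars false

lemma update_flip_flip (k : ι) (x : ι → Fin 2) :
    Function.update (Function.update x k (x k + 1)) k
      (Function.update x k (x k + 1) k + 1) = x := by
  ext j
  rcases eq_or_ne j k with rfl | h
  · simp [fin2_add_one_add_one]
  · simp [Function.update_of_ne h]

lemma XMat_mul_XMat (k l : ι) :
    XMat ι k * XMat ι l = Matrix.of fun x z =>
      if z = Function.update (Function.update x k (x k + 1)) l
        (Function.update x k (x k + 1) l + 1) then (1 : ℂ) else 0 := by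
  ext x z
  rw [Matrix.mul_apply]
  simp only [XMat, Matrix.of_apply, ite_mul, one_mul, zero_mul]
  rw [Finset.sum_ite_eq' Finset.univ (Function.update x k (x k + 1))
    (fun y => if z = Function.update y l (y l + 1) then (1 : ℂ) else 0)]
  simp

lemma update_flip_comm (k l : ι) (x : ι → Fin 2) :
    Function.update (Function.update x k (x k + 1)) l
      (Function.update x k (x k + 1) l + 1) =
    Function.update (Function.update x l (x l + 1)) k
      (Function.update x l (x l + 1) k + 1) := by
  rcases eq_or_ne k l with rfl | hkl
  · rfl
  · rw [Function.update_of_ne (Ne.symm hkl) , Function.update_of_ne hkl]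
    exact Function.update_comm hkl _ _ x

lemma XU_comm (k l : ι) : XU ι k * XU ι l = XU ι l * XU ι k := by
  apply Units.ext
  show XMat ι k * XMat ι l = XMat ι l * XMat ι k
  rw [XMat_mul_XMat, XMat_mul_XMat]
  ext x z
  simp only [Matrix.of_apply]
  rw [update_flip_comm]

lemma ZU_comm (k l : ι) : ZU ι k * ZU ι l = ZU ι l * ZU ι k := by
  apply Units.ext
  show ZMat ι k * ZMat ι l = ZMat ι l * ZMat ι k
  simp only [ZMat, Matrix.diagonal_mul_diagonal]
  have : (fun i : ι → Fin 2 => ((-1 : ℂ)) ^ (i k : ℕ) * (-1) ^ (i l : ℕ)) =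
      fun i => ((-1 : ℂ)) ^ (i l : ℕ) * (-1) ^ (i k : ℕ) := by funext i; ring
  rw [this]

lemma XU_ZU_comm {k l : ι} (h : k ≠ l) : XU ι k * ZU ι l = ZU ι l * XU ι k := by
  apply Units.ext
  show XMat ι k * ZMat ι l = ZMat ι l * XMat ι k
  ext x y
  rw [ZMat, Matrix.mul_diagonal, Matrix.diagonal_mul]
  simp only [XMat, Matrix.of_apply]
  split_ifs with hy
  · subst hy
    rw [Function.update_of_ne (Ne.symm h)]
    ring
  · ring

lemma neg_one_fin2 : ∀ a : Fin 2, ((-1 : ℂ)) ^ (((a + 1) : Fin 2) : ℕ) = -((-1 : ℂ)) ^ ((a : ℕ)) := by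
  intro a
  fin_cases a
  · norm_num
  · norm_num [show ((1 : Fin 2) + 1 : Fin 2) = 0 from rfl]

lemma XU_ZU_anticomm (k : ι) : XU ι k * ZU ι k = -(ZU ι k * XU ι k) := by
  apply Units.ext
  rw [Units.val_neg]
  show XMat ι k * ZMat ι k = -(ZMat ι k * XMat ι k)
  ext x y
  rw [ZMat, Matrix.neg_apply, Matrix.mul_diagonal, Matrix.diagonal_mul]
  simp only [XMat, Matrix.of_apply]
  split_ifs with hy
  · subst hy
    rw [Function.update_self, neg_one_fin2]
    ring
  · ring


/-- The subgroup `{±1}`. -/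
def signK : Subgroup (PMat ι)ˣ := Subgroup.zpowers (-1 : (PMat ι)ˣ)

lemma neg_one_central (a : (PMat ι)ˣ) : Commute (-1 : (PMat ι)ˣ) a :=
  Commute.neg_one_left a

instance signK_normal : (signK ι).Normal := by
  constructor
  intro x hx g
  obtain ⟨m, rfl⟩ := Subgroup.mem_zpowers_iff.mp hx
  have hc : Commute ((-1 : (PMat ι)ˣ) ^ m) g := ((neg_one_central ι g).zpow_left m)
  have heq : g * (-1 : (PMat ι)ˣ) ^ m * g⁻¹ = (-1) ^ m := by
    rw [← hc.eq, mul_assoc]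
    simp
  rw [heq]
  exact Subgroup.zpow_mem _ (Subgroup.mem_zpowers _) m

lemma signK_cases {u : (PMat ι)ˣ} (hu : u ∈ signK ι) : u = 1 ∨ u = -1 := by
  obtain ⟨m, rfl⟩ := Subgroup.mem_zpowers_iff.mp hu
  have h2 : ((-1 : (PMat ι)ˣ)) ^ (2 : ℤ) = 1 := by
    rw [zpow_two]; simp
  rcases Int.even_or_odd m with he | ho
  · left
    obtain ⟨t, rfl⟩ := he
    rw [← two_mul, _root_.zpow_mul, h2, _root_.one_zpow]
  · right
    obtain ⟨t, rfl⟩ := ho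
    rw [_root_.zpow_add, _root_.zpow_mul, h2]
    rw [_root_.one_zpow, zpow_one, one_mul]

/-- The generating set of the Pauli group. -/
def pauliGens : Set (PMat ι)ˣ := {iU ι} ∪ Set.range (XU ι) ∪ Set.range (ZU ι)

lemma pauliGroup_eq : PauliGroup ι = Subgroup.closure (pauliGens ι) := rfl

lemma gens_comm_mod (a b : (PMat ι)ˣ) (ha : a ∈ pauliGens ι) (hb : b ∈ pauliGens ι) :
    Commute (QuotientGroup.mk' (signK ι) a) (QuotientGroup.mk' (signK ι) b) := by
  set π := QuotientGroup.mk' (signK ι)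
  have key : ∀ u v : (PMat ι)ˣ, u * v = v * u ∨ u * v = -(v * u) → Commute (π u) (π v) := by
    intro u v h
    rcases h with h | h
    · have : π (u * v) = π (v * u) := congrArg π h
      exact (by simpa [_root_.map_mul] using this : π u * π v = π v * π u)
    · have : π (u * v) = π (-(v * u)) := congrArg π h
      have hneg : π (-(v * u)) = π (v * u) := by
        have : -(v * u) = (-1) * (v * u) := by rw [neg_mul, one_mul]
        rw [this, _root_.map_mul]
        have h1 : π (-1 : (PMat ι)ˣ) = 1 := by
          rw [QuotientGroup.mk'_apply, QuotientGroup.eq_one_iff]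
          exact Subgroup.mem_zpowers _
        rw [h1, one_mul]
      have := this.trans hneg
      exact (by simpa [_root_.map_mul] using this : π u * π v = π v * π u)
  rcases ha with (ha | ⟨k, rfl⟩) | ⟨k, rfl⟩
  · rw [Set.mem_singleton_iff] at ha; subst ha
    exact key _ _ (Or.inl (iU_central ι b))
  · rcases hb with (hb | ⟨l, rfl⟩) | ⟨l, rfl⟩
    · rw [Set.mem_singleton_iff] at hb; subst hb
      exact key _ _ (Or.inl (iU_central ι (XU ι k)).symm)
    · exact key _ _ (Or.inl (XU_comm ι k l))
    · rcases eq_or_ne k l with rfl | hkl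
      · exact key _ _ (Or.inr (XU_ZU_anticomm ι k))
      · exact key _ _ (Or.inl (XU_ZU_comm ι hkl))
  · rcases hb with (hb | ⟨l, rfl⟩) | ⟨l, rfl⟩
    · rw [Set.mem_singleton_iff] at hb; subst hb
      exact key _ _ (Or.inl (iU_central ι (ZU ι k)).symm)
    · rcases eq_or_ne l k with rfl | hkl
      · exact (key _ _ (Or.inr (XU_ZU_anticomm ι l))).symm
      · exact (key _ _ (Or.inl (XU_ZU_comm ι hkl))).symm
    · exact key _ _ (Or.inl (ZU_comm ι k l))

lemma pauli_comm_mod {g h : (PMat ι)ˣ} (hg : g ∈ PauliGroup ι) (hh : h ∈ PauliGroup ι) :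
    Commute (QuotientGroup.mk' (signK ι) g) (QuotientGroup.mk' (signK ι) h) := by
  set π := QuotientGroup.mk' (signK ι)
  rw [pauliGroup_eq] at hg hh
  have step1 : ∀ a ∈ pauliGens ι, ∀ y, y ∈ Subgroup.closure (pauliGens ι) →
      Commute (π a) (π y) := by
    intro a ha y hy
    induction hy using Subgroup.closure_induction with
    | mem z hz => exact gens_comm_mod ι a z ha hz
    | one => simp
    | mul u v _ _ hu hv => rw [_root_.map_mul]; exact hu.mul_right hv
    | inv u _ hu => rw [_root_.map_inv]; exact hu.inv_right
  induction hg using Subgroup.closure_induction with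
  | mem z hz => exact step1 z hz h hh
  | one => simp
  | mul u v _ _ hu hv => rw [_root_.map_mul]; exact hu.mul_left hv
  | inv u _ hu => rw [_root_.map_inv]; exact hu.inv_left

/-- Any two Paulis commute or anticommute. -/
lemma pauli_comm_or_anticomm {g h : (PMat ι)ˣ} (hg : g ∈ PauliGroup ι)
    (hh : h ∈ PauliGroup ι) : g * h = h * g ∨ g * h = -(h * g) := by
  have hc := pauli_comm_mod ι hg hh
  have : QuotientGroup.mk' (signK ι) (g * h) = QuotientGroup.mk' (signK ι) (h * g) := by
    rw [_root_.map_mul, _root_.map_mul]; exact hc.eq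
  rw [QuotientGroup.mk'_apply, QuotientGroup.mk'_apply, QuotientGroup.eq] at this
  rcases signK_cases ι this with h1 | h1
  · left
    have := congrArg (fun t => (g * h) * t) h1
    simpa [mul_assoc, mul_inv_cancel_left] using this.symm
  · right
    have := congrArg (fun t => (g * h) * t) h1
    simp only [mul_inv_cancel_left, mul_neg, mul_one] at this
    rw [this, neg_neg]

lemma XMat_conjTranspose (k : ι) : (XMat ι k)ᴴ = XMat ι k := by
  ext x y
  simp only [Matrix.conjTranspose_apply, XMat, Matrix.of_apply]
  have hiff : (x = Function.update y k (y k + 1)) ↔ (y = Function.update x k (x k + 1)) := by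
    constructor
    · intro h; rw [h, update_flip_flip]
    · intro h; rw [h, update_flip_flip]
  rw [if_congr hiff rfl rfl]
  split_ifs <;> simp

lemma ZMat_conjTranspose (k : ι) : (ZMat ι k)ᴴ = ZMat ι k := by
  ext x y
  rw [Matrix.conjTranspose_apply]
  rcases eq_or_ne x y with rfl | h
  · simp only [ZMat, Matrix.diagonal_apply_eq]
    simp [star_pow]
  · rw [ZMat, Matrix.diagonal_apply_ne _ (Ne.symm h), Matrix.diagonal_apply_ne _ h, star_zero]

/-- Every Pauli is unitary. -/
lemma pauli_unitary {g : (PMat ι)ˣ} (hg : g ∈ PauliGroup ι) :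
    ((g : PMat ι))ᴴ * (g : PMat ι) = 1 := by
  induction hg using Subgroup.closure_induction with
  | mem z hz =>
    rcases hz with (hz | ⟨k, rfl⟩) | ⟨k, rfl⟩
    · rw [Set.mem_singleton_iff] at hz; subst hz
      show ((Complex.I • (1 : PMat ι)))ᴴ * (Complex.I • (1 : PMat ι)) = 1
      rw [Matrix.conjTranspose_smul, Matrix.conjTranspose_one]
      rw [Complex.star_def, Complex.conj_I]
      exact iMat_mul' ι
    · show (XMat ι k)ᴴ * (XMat ι k) = 1
      rw [XMat_conjTranspose]; exact XMat_mul_self ι k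
    · show (ZMat ι k)ᴴ * (ZMat ι k) = 1
      rw [ZMat_conjTranspose]; exact ZMat_mul_self ι k
  | one => simp
  | mul u v _ _ hu hv =>
    rw [Units.val_mul, Matrix.conjTranspose_mul, mul_assoc, ← mul_assoc ((u : PMat ι))ᴴ, hu,
      one_mul, hv]
  | inv u _ hu =>
    have h1 : ((u : PMat ι))ᴴ = ((u⁻¹ : (PMat ι)ˣ) : PMat ι) := by
      calc ((u : PMat ι))ᴴ
          = ((u : PMat ι))ᴴ * ((u : PMat ι) * ((u⁻¹ : (PMat ι)ˣ) : PMat ι)) := by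
            rw [← Units.val_mul, mul_inv_cancel, Units.val_one, mul_one]
        _ = (((u : PMat ι))ᴴ * (u : PMat ι)) * ((u⁻¹ : (PMat ι)ˣ) : PMat ι) := by
            rw [mul_assoc]
        _ = ((u⁻¹ : (PMat ι)ˣ) : PMat ι) := by rw [hu, one_mul]
    show ((↑u⁻¹ : PMat ι))ᴴ * (↑u⁻¹ : PMat ι) = 1
    rw [← h1, Matrix.conjTranspose_conjTranspose]
    exact mul_eq_one_comm.mp hu

lemma iU_sq : iU ι * iU ι = -1 := by
  apply Units.ext
  rw [Units.val_neg, Units.val_one]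
  show (Complex.I • (1 : PMat ι)) * (Complex.I • (1 : PMat ι)) = -1
  rw [smul_mul_smul_comm, Complex.I_mul_I, one_mul, neg_smul, one_smul]

/-- Every Pauli squares to `±1`. -/
lemma pauli_sq {g : (PMat ι)ˣ} (hg : g ∈ PauliGroup ι) : g * g = 1 ∨ g * g = -1 := by
  induction hg using Subgroup.closure_induction with
  | mem z hz =>
    rcases hz with (hz | ⟨k, rfl⟩) | ⟨k, rfl⟩
    · rw [Set.mem_singleton_iff] at hz; subst hz
      right; exact iU_sq ι
    · left; exact Units.ext (XMat_mul_self ι k)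
    · left; exact Units.ext (ZMat_mul_self ι k)
  | one => simp
  | mul u v hu' hv' hu hv =>
    have hcc := pauli_comm_or_anticomm ι hu' hv'
    have key : (u * v) * (u * v) = (u * u) * (v * v) ∨
        (u * v) * (u * v) = -((u * u) * (v * v)) := by
      rcases hcc with hc | hc
      · left
        calc (u * v) * (u * v) = u * (v * u) * v := by group
        _ = u * (u * v) * v := by rw [← hc]
        _ = (u * u) * (v * v) := by group
      · right
        have hvu : v * u = -(u * v) := by rw [hc, neg_neg]
        calc (u * v) * (u * v) = u * (v * u) * v := by group
        _ = u * (-(u * v)) * v := by rw [hvu]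
        _ = -((u * u) * (v * v)) := by rw [mul_neg, neg_mul]; group
    rcases key with key | key <;> rcases hu with hu | hu <;> rcases hv with hv | hv <;>
      rw [key, hu, hv] <;> simp
  | inv u _ hu =>
    have : u⁻¹ * u⁻¹ = (u * u)⁻¹ := by rw [_root_.mul_inv_rev]
    rcases hu with hu | hu
    · left; rw [this, hu, inv_one]
    · right; rw [this, hu]
      exact inv_eq_of_mul_eq_one_right (by simp)

lemma unit_ne_neg (u : (PMat ι)ˣ) : u ≠ -u := by
  intro h
  have h1 : (u : PMat ι) = -(u : PMat ι) := by
    rw [h, Units.val_neg, neg_neg, ← Units.val_neg, ← h]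
  have h0 : (u : PMat ι) + u = 0 := by
    nth_rewrite 1 [h1]
    exact neg_add_cancel _
  have h2 : (2 : ℂ) • (u : PMat ι) = 0 := by rw [two_smul]; exact h0
  have h3 : (u : PMat ι) = 0 := by
    rcases smul_eq_zero.mp h2 with h | h
    · norm_num at h
    · exact h
  have h4 : (1 : PMat ι) = 0 := by
    calc (1 : PMat ι) = ((u⁻¹ : (PMat ι)ˣ) : PMat ι) * (u : PMat ι) := by
          rw [← Units.val_mul, inv_mul_cancel, Units.val_one]
    _ = ((u⁻¹ : (PMat ι)ˣ) : PMat ι) * 0 := by rw [h3]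
    _ = 0 := by rw [mul_zero]
  have h5 := congrFun (congrFun h4 (fun _ => 0)) (fun _ => 0)
  rw [Matrix.one_apply_eq, Matrix.zero_apply] at h5
  exact one_ne_zero h5

lemma anticomm_not_comm {a b : (PMat ι)ˣ} (h : a * b = -(b * a)) : ¬ Commute a b := by
  intro hc
  have : b * a = -(b * a) := by
    conv_lhs => rw [← hc.eq, h]
  exact unit_ne_neg ι (b * a) this

/-- Elements of a stabilizer group pairwise commute. -/
lemma stab_comm {Sx : Subgroup (PMat ι)ˣ} (hSx : IsStabilizer ι Sx)
    {g h : (PMat ι)ˣ} (hg : g ∈ Sx) (hh : h ∈ Sx) : Commute g h := by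
  rcases pauli_comm_or_anticomm ι (hSx.le hg) (hSx.le hh) with hc | hc
  · exact hc
  · exfalso
    apply hSx.neg_one_notMem
    have : (h * g)⁻¹ * (g * h) = -1 := by
      rw [hc, mul_neg, inv_mul_cancel]
    rw [← this]
    exact Subgroup.mul_mem _ (Subgroup.inv_mem _ (Subgroup.mul_mem _ hh hg))
      (Subgroup.mul_mem _ hg hh)

/-- Elements of a stabilizer group square to one. -/
lemma stab_sq {Sx : Subgroup (PMat ι)ˣ} (hSx : IsStabilizer ι Sx)
    {g : (PMat ι)ˣ} (hg : g ∈ Sx) : g * g = 1 := by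
  rcases pauli_sq ι (hSx.le hg) with h | h
  · exact h
  · exfalso
    apply hSx.neg_one_notMem
    rw [← h]
    exact Subgroup.mul_mem _ hg hg

/-- For a stabilizer group, membership in the normalizer is equivalent to centralizing. -/
lemma mem_normIn_iff {Sx : Subgroup (PMat ι)ˣ} (hSx : IsStabilizer ι Sx)
    {g : (PMat ι)ˣ} :
    g ∈ NormIn ι Sx ↔ g ∈ PauliGroup ι ∧ ∀ t ∈ Sx, Commute g t := by
  constructor
  · intro hg
    obtain ⟨hgn, hgp⟩ := Subgroup.mem_inf.mp hg
    refine ⟨hgp, fun t ht => ?_⟩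
    rcases pauli_comm_or_anticomm ι hgp (hSx.le ht) with hc | hc
    · exact hc
    · exfalso
      apply hSx.neg_one_notMem
      have h1 : g * t * g⁻¹ ∈ Sx := (Subgroup.mem_normalizer_iff.mp hgn t).mp ht
      have h2 : g * t * g⁻¹ = -t := by
        rw [hc]
        rw [neg_mul, mul_assoc]
        simp
      rw [h2] at h1
      have : (-1 : (PMat ι)ˣ) = (-t) * t⁻¹ := by rw [neg_mul, mul_inv_cancel]
      rw [this]
      exact Subgroup.mul_mem _ h1 (Subgroup.inv_mem _ ht)
  · intro ⟨hgp, hc⟩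
    refine Subgroup.mem_inf.mpr ⟨Subgroup.mem_normalizer_iff.mpr fun t => ?_, hgp⟩
    constructor
    · intro ht
      have heq := (hc t ht).eq
      rw [heq, mul_assoc]
      simpa using ht
    · intro ht
      have h3 : g⁻¹ * (g * t * g⁻¹) = (g * t * g⁻¹) * g⁻¹ := ((hc _ ht).inv_left).eq
      have h2 : t = g⁻¹ * (g * t * g⁻¹) * g := by group
      rw [h2, h3, mul_assoc]
      simpa using ht

lemma zmod2_pow_add {M : Type*} [Monoid M] {g : M} (hg : g * g = 1) (u v : ZMod 2) :
    g ^ (u + v).val = g ^ u.val * g ^ v.val := by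
  have h2 : g ^ 2 = 1 := by rw [pow_two]; exact hg
  rw [ZMod.val_add, ← pow_eq_pow_mod _ h2, pow_add]

lemma zmod2_cases : ∀ u : ZMod 2, u = 0 ∨ u = 1 := by decide

end Aux
/-- Case 3 of the normalizer formalism: measuring a Hermitian Pauli `p` that anticommutes
with the generator `s 0` of `S = ⟨s 0, …, s (r-1)⟩` and commutes with the others, given a
presentation of `N(S)/S ≅ P_k` whose representatives all commute with `p`, yields
`S' = ⟨p, s 1, …, s (r-1)⟩`, a stabilizer group of rank `r`, and the same representatives
present `N(S')/S' ≅ P_k`. -/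
theorem normalizer_formalism_case_three (n r k : ℕ) (hk : k = n - r) (hr0 : 0 < r)
    (s : Fin r → (PMat (Fin n))ˣ) (S : Subgroup (PMat (Fin n))ˣ)
    (hgen : Subgroup.closure (Set.range s) = S)
    (hS : IsStabilizer (Fin n) S) (hrank : HasRank S r)
    (p : (PMat (Fin n))ˣ) (hp : p ∈ PauliGroup (Fin n)) (hherm : IsHermitianPauli (Fin n) p)
    (hanti : p * s ⟨0, hr0⟩ = -(s ⟨0, hr0⟩ * p))
    (hcomm : ∀ i, i ≠ ⟨0, hr0⟩ → Commute p (s i))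
    (x z : Fin k → (PMat (Fin n))ˣ)
    (hx : ∀ j, x j ∈ NormIn (Fin n) S) (hz : ∀ j, z j ∈ NormIn (Fin n) S)
    (hxp : ∀ j, Commute (x j) p) (hzp : ∀ j, Commute (z j) p)
    (φ : LogicalGroup (Fin n) S ≃* ↥(PauliGroup (Fin k)))
    (hφi : φ (QuotientGroup.mk ⟨iU (Fin n), iU_mem_normIn (Fin n) S⟩) =
      ⟨iU (Fin k), iU_mem (Fin k)⟩)
    (hφx : ∀ j, φ (QuotientGroup.mk ⟨x j, hx j⟩) = ⟨XU (Fin k) j, XU_mem (Fin k) j⟩)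
    (hφz : ∀ j, φ (QuotientGroup.mk ⟨z j, hz j⟩) = ⟨ZU (Fin k) j, ZU_mem (Fin k) j⟩)
    (S' : Subgroup (PMat (Fin n))ˣ)
    (hS' : S' = Subgroup.closure ({p} ∪ s '' {i | i ≠ ⟨0, hr0⟩})) :
    IsStabilizer (Fin n) S' ∧ HasRank S' r ∧
    ∃ (hx' : ∀ j, x j ∈ NormIn (Fin n) S') (hz' : ∀ j, z j ∈ NormIn (Fin n) S'),
      Subgroup.closure
          (({QuotientGroup.mk ⟨iU (Fin n), iU_mem_normIn (Fin n) S'⟩} ∪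
            Set.range (fun j => QuotientGroup.mk ⟨x j, hx' j⟩) ∪
            Set.range (fun j => QuotientGroup.mk ⟨z j, hz' j⟩) :
              Set (LogicalGroup (Fin n) S'))) = ⊤ ∧
      ∃ ψ : LogicalGroup (Fin n) S' ≃* ↥(PauliGroup (Fin k)),
        ψ (QuotientGroup.mk ⟨iU (Fin n), iU_mem_normIn (Fin n) S'⟩) =
            ⟨iU (Fin k), iU_mem (Fin k)⟩ ∧
        (∀ j, ψ (QuotientGroup.mk ⟨x j, hx' j⟩) = ⟨XU (Fin k) j, XU_mem (Fin k) j⟩) ∧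
        (∀ j, ψ (QuotientGroup.mk ⟨z j, hz' j⟩) = ⟨ZU (Fin k) j, ZU_mem (Fin k) j⟩) := by
  classical
  set i0 : Fin r := ⟨0, hr0⟩ with hi0def
  -- basic facts about S and its generators
  have hsiS : ∀ i, s i ∈ S := fun i => by rw [← hgen]; exact Subgroup.subset_closure ⟨i, rfl⟩
  have hscomm : ∀ i j, Commute (s i) (s j) := fun i j => stab_comm _ hS (hsiS i) (hsiS j)
  have hps0 : ¬ Commute p (s i0) := anticomm_not_comm _ hanti
  have hpp : p * p = 1 := by
    have h1 := pauli_unitary _ hp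
    rw [show ((p : PMat (Fin n)))ᴴ = (p : PMat (Fin n)) from hherm] at h1
    exact Units.ext h1
  have hpinv : p⁻¹ = p := inv_eq_of_mul_eq_one_left hpp
  -- the subgroup T generated by the commuting generators
  set T : Subgroup (PMat (Fin n))ˣ := Subgroup.closure (s '' {i | i ≠ i0}) with hTdef
  have hTS : T ≤ S := by
    rw [hTdef, ← hgen]
    apply (Subgroup.closure_le _).mpr
    rintro y ⟨i, _, rfl⟩
    exact Subgroup.subset_closure ⟨i, rfl⟩
  have hpT : ∀ u ∈ T, Commute p u := by
    intro u hu
    have hle : T ≤ Subgroup.centralizer {p} := by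
      rw [hTdef]
      apply (Subgroup.closure_le _).mpr
      rintro y ⟨i, hi, rfl⟩
      rw [SetLike.mem_coe, Subgroup.mem_centralizer_iff]
      intro h hh
      rw [Set.mem_singleton_iff] at hh; subst hh
      exact (hcomm i hi).eq
    have hmem := hle hu
    rw [Subgroup.mem_centralizer_iff] at hmem
    exact hmem p rfl
  have hs0T : ∀ u ∈ T, Commute (s i0) u :=
    fun u hu => stab_comm _ hS (hsiS i0) (hTS hu)
  have hs0sq : s i0 * s i0 = 1 := stab_sq _ hS (hsiS i0)
  -- decomposition of S'
  have hS'dec : ∀ g ∈ S', g ∈ T ∨ ∃ u ∈ T, g = p * u := by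
    intro g hg
    rw [hS'] at hg
    induction hg using Subgroup.closure_induction with
    | mem z hz =>
      rcases hz with hz | ⟨i, hi, rfl⟩
      · rw [Set.mem_singleton_iff] at hz
        rw [hz]
        exact Or.inr ⟨1, one_mem _, (mul_one p).symm⟩
      · exact Or.inl (Subgroup.subset_closure ⟨i, hi, rfl⟩)
    | one => exact Or.inl (one_mem _)
    | mul a b _ _ ha hb =>
      rcases ha with ha | ⟨u, hu, rfl⟩ <;> rcases hb with hb | ⟨v, hv, rfl⟩
      · exact Or.inl (mul_mem ha hb)
      · refine Or.inr ⟨a * v, mul_mem ha hv, ?_⟩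
        rw [← mul_assoc, ← (hpT a ha).eq, mul_assoc]
      · exact Or.inr ⟨u * b, mul_mem hu hb, by rw [mul_assoc]⟩
      · refine Or.inl ?_
        have : (p * u) * (p * v) = u * v := by
          rw [mul_assoc, ← mul_assoc u p v, ← (hpT u hu).eq, mul_assoc p u, ← mul_assoc p p,
            hpp, one_mul]
        rw [this]; exact mul_mem hu hv
    | inv a _ ha =>
      rcases ha with ha | ⟨u, hu, rfl⟩
      · exact Or.inl (inv_mem ha)
      · refine Or.inr ⟨u⁻¹, inv_mem hu, ?_⟩
        rw [_root_.mul_inv_rev, hpinv, ← ((hpT u hu).inv_right).eq]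
  -- decomposition of S
  have hSdec : ∀ g ∈ S, g ∈ T ∨ ∃ u ∈ T, g = s i0 * u := by
    intro g hg
    rw [← hgen] at hg
    induction hg using Subgroup.closure_induction with
    | mem z hz =>
      obtain ⟨i, rfl⟩ := hz
      rcases eq_or_ne i i0 with rfl | hi
      · exact Or.inr ⟨1, one_mem _, (mul_one _).symm⟩
      · exact Or.inl (Subgroup.subset_closure ⟨i, hi, rfl⟩)
    | one => exact Or.inl (one_mem _)
    | mul a b _ _ ha hb =>
      rcases ha with ha | ⟨u, hu, rfl⟩ <;> rcases hb with hb | ⟨v, hv, rfl⟩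
      · exact Or.inl (mul_mem ha hb)
      · refine Or.inr ⟨a * v, mul_mem ha hv, ?_⟩
        rw [← mul_assoc, ← (hs0T a ha).eq, mul_assoc]
      · exact Or.inr ⟨u * b, mul_mem hu hb, by rw [mul_assoc]⟩
      · refine Or.inl ?_
        have : (s i0 * u) * (s i0 * v) = u * v := by
          rw [mul_assoc, ← mul_assoc u _ v, ← (hs0T u hu).eq, mul_assoc (s i0) u,
            ← mul_assoc (s i0) (s i0), hs0sq, one_mul]
        rw [this]; exact mul_mem hu hv
    | inv a _ ha =>
      rcases ha with ha | ⟨u, hu, rfl⟩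
      · exact Or.inl (inv_mem ha)
      · refine Or.inr ⟨u⁻¹, inv_mem hu, ?_⟩
        have hinv0 : (s i0)⁻¹ = s i0 := inv_eq_of_mul_eq_one_left hs0sq
        rw [_root_.mul_inv_rev, hinv0, ← ((hs0T u hu).inv_right).eq]
  -- anything in S commuting with p lies in T
  have hTp : ∀ t ∈ S, Commute p t → t ∈ T := by
    intro t ht hct
    rcases hSdec t ht with h | ⟨u, hu, rfl⟩
    · exact h
    · exfalso
      apply hps0
      have h1 : Commute p ((s i0 * u) * u⁻¹) := hct.mul_right (hpT u hu).inv_right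
      rwa [mul_inv_cancel_right] at h1
  -- S' is a stabilizer group
  have hstabS' : IsStabilizer (Fin n) S' := by
    constructor
    · rw [hS']
      apply (Subgroup.closure_le _).mpr
      rintro y (hy | ⟨i, hi, rfl⟩)
      · rw [Set.mem_singleton_iff] at hy; rw [hy]; exact hp
      · exact hS.le (hsiS i)
    · intro hneg
      rcases hS'dec _ hneg with h | ⟨u, hu, h⟩
      · exact hS.neg_one_notMem (hTS h)
      · apply hps0
        have hpe : p = (-1 : (PMat (Fin n))ˣ) * u⁻¹ := by
          rw [h, mul_assoc, mul_inv_cancel, mul_one]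
        rw [hpe]
        exact (Commute.neg_one_left _).mul_left ((stab_comm _ hS (hTS hu) (hsiS i0)).inv_left)
  -- injectivity of s
  have hsinj : Function.Injective s := by
    have hgen0 : Subgroup.closure ((Finset.image s Finset.univ : Finset _) : Set _) = S := by
      rw [Finset.coe_image, Finset.coe_univ, Set.image_univ, hgen]
    have hcard : (Finset.image s Finset.univ).card = r :=
      le_antisymm (le_trans Finset.card_image_le (by simp)) (hrank.2 _ hgen0)
    have hio : Set.InjOn s (Finset.univ : Finset (Fin r)) :=
      Finset.card_image_iff.mp (by rw [hcard, Finset.card_univ, Fintype.card_fin])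
    intro a b hab
    exact hio (by simp) (by simp) hab
  -- S' membership of generators
  have hpS' : p ∈ S' := by rw [hS']; exact Subgroup.subset_closure (Or.inl rfl)
  have hsS' : ∀ i, i ≠ i0 → s i ∈ S' := fun i hi => by
    rw [hS']; exact Subgroup.subset_closure (Or.inr ⟨i, hi, rfl⟩)
  have hTleS' : T ≤ S' := by
    rw [hTdef]
    apply (Subgroup.closure_le _).mpr
    rintro y ⟨i, hi, rfl⟩
    exact hsS' i hi
  -- S' is commutative
  letI : CommGroup ↥S' :=
    { (inferInstance : Group ↥S') with
      mul_comm := fun a b => Subtype.ext ((stab_comm _ hstabS' a.2 b.2).eq) }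
  have hsq' : ∀ a : ↥S', a * a = 1 := fun a => Subtype.ext (stab_sq _ hstabS' a.2)
  -- lower bound map
  set w : Fin r → ↥S' := fun i => if h : i = i0 then ⟨p, hpS'⟩ else ⟨s i, hsS' i h⟩ with hwdef
  set lmap : (Fin r → ZMod 2) → ↥S' := fun c => ∏ i, (w i) ^ (c i).val with hlmapdef
  have hladd : ∀ c d, lmap (c + d) = lmap c * lmap d := by
    intro c d
    rw [hlmapdef]
    simp only []
    rw [← Finset.prod_mul_distrib]
    apply Finset.prod_congr rfl
    intro i _
    exact zmod2_pow_add (hsq' (w i)) (c i) (d i)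
  have hlker : ∀ c, lmap c = 1 → c = 0 := by
    intro c hc
    by_contra hc0
    have hsplit : lmap c = w i0 ^ (c i0).val * ∏ i ∈ Finset.univ.erase i0, w i ^ (c i).val :=
      (Finset.mul_prod_erase Finset.univ _ (Finset.mem_univ i0)).symm
    set u : ↥S' := ∏ i ∈ Finset.univ.erase i0, w i ^ (c i).val with hudef
    have huT : (u : (PMat (Fin n))ˣ) ∈ T := by
      have hmem : u ∈ T.comap S'.subtype := by
        rw [hudef]
        apply Subgroup.prod_mem
        intro i hi
        apply Subgroup.pow_mem
        rw [Subgroup.mem_comap]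
        have hi' : i ≠ i0 := (Finset.mem_erase.mp hi).1
        show ((w i : ↥S') : (PMat (Fin n))ˣ) ∈ T
        rw [hwdef]
        simp only [dif_neg hi']
        exact Subgroup.subset_closure ⟨i, hi', rfl⟩
      rwa [Subgroup.mem_comap] at hmem
    rcases zmod2_cases (c i0) with hczero | hcone
    · -- c i0 = 0 : a relation among the other generators
      have hu1 : u = 1 := by
        rw [hsplit, hczero] at hc
        simpa using hc
      have hj : ∃ j, c j ≠ 0 := by
        by_contra hje
        push_neg at hje
        exact hc0 (funext fun j => hje j)
      obtain ⟨j, hcj⟩ := hj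
      have hji0 : j ≠ i0 := by rintro rfl; exact hcj hczero
      have hcj1 : c j = 1 := (zmod2_cases (c j)).resolve_left hcj
      have hsplit2 : u = w j ^ (c j).val *
          ∏ i ∈ (Finset.univ.erase i0).erase j, w i ^ (c i).val :=
        (Finset.mul_prod_erase _ _ (Finset.mem_erase.mpr ⟨hji0, Finset.mem_univ j⟩)).symm
      set v : ↥S' := ∏ i ∈ (Finset.univ.erase i0).erase j, w i ^ (c i).val with hvdef
      have hwj : w j = v⁻¹ := by
        have : w j * v = 1 := by
          rw [hsplit2, hcj1, show ((1 : ZMod 2)).val = 1 by decide, pow_one] at hu1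
          exact hu1
        exact eq_inv_of_mul_eq_one_left this
      -- push to the ambient group
      set V : Subgroup (PMat (Fin n))ˣ := Subgroup.closure (s '' {i | i ≠ j}) with hVdef
      have hvV : (v : (PMat (Fin n))ˣ) ∈ V := by
        have hmem : v ∈ V.comap S'.subtype := by
          rw [hvdef]
          apply Subgroup.prod_mem
          intro i hi
          apply Subgroup.pow_mem
          rw [Subgroup.mem_comap]
          have hij : i ≠ j := (Finset.mem_erase.mp hi).1
          have hii0 : i ≠ i0 := (Finset.mem_erase.mp (Finset.mem_erase.mp hi).2).1
          show ((w i : ↥S') : (PMat (Fin n))ˣ) ∈ V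
          rw [hwdef]
          simp only [dif_neg hii0]
          exact Subgroup.subset_closure ⟨i, hij, rfl⟩
        rwa [Subgroup.mem_comap] at hmem
      have hsjV : s j ∈ V := by
        have : ((w j : ↥S') : (PMat (Fin n))ˣ) ∈ V := by
          rw [hwj]
          exact Subgroup.inv_mem _ hvV
        rw [hwdef] at this
        simpa only [dif_neg hji0] using this
      have hSV : S ≤ V := by
        rw [← hgen]
        apply (Subgroup.closure_le _).mpr
        rintro y ⟨i, rfl⟩
        rcases eq_or_ne i j with rfl | hij
        · exact hsjV
        · exact Subgroup.subset_closure ⟨i, hij, rfl⟩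
      have hVgen : Subgroup.closure ((Finset.image s (Finset.univ.erase j) : Finset _) : Set _) = S := by
        apply le_antisymm
        · apply (Subgroup.closure_le _).mpr
          rintro y hy
          rw [Finset.coe_image] at hy
          obtain ⟨i, _, rfl⟩ := hy
          exact hsiS i
        · refine le_trans hSV ?_
          rw [hVdef]
          apply Subgroup.closure_mono
          rintro y ⟨i, hi, rfl⟩
          rw [Finset.coe_image, Finset.coe_erase, Finset.coe_univ]
          exact ⟨i, ⟨Set.mem_univ i, hi⟩, rfl⟩
      have hle := hrank.2 _ hVgen
      have hcard2 : (Finset.image s (Finset.univ.erase j)).card ≤ r - 1 := by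
        calc (Finset.image s (Finset.univ.erase j)).card ≤ (Finset.univ.erase j).card :=
          Finset.card_image_le
        _ = r - 1 := by rw [Finset.card_erase_of_mem (Finset.mem_univ j), Finset.card_univ,
          Fintype.card_fin]
      omega
    · -- c i0 = 1 : p would lie in S
      apply hps0
      have hone : (⟨p, hpS'⟩ : ↥S') * u = 1 := by
        rw [hsplit, hcone, show ((1 : ZMod 2)).val = 1 by decide, pow_one] at hc
        rw [show w i0 = (⟨p, hpS'⟩ : ↥S') from by rw [hwdef]; simp] at hc
        exact hc
      have hpu : p * (u : (PMat (Fin n))ˣ) = 1 := by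
        have hcg := congrArg (S'.subtype) hone
        simpa using hcg
      have hpinvu : p = (u : (PMat (Fin n))ˣ)⁻¹ := eq_inv_of_mul_eq_one_left hpu
      rw [hpinvu]
      exact (stab_comm _ hS (hTS huT) (hsiS i0)).inv_left
  have hlinj : Function.Injective lmap := by
    intro a b hab
    have h1 : lmap (a - b + b) = lmap (a - b) * lmap b := hladd _ _
    rw [sub_add_cancel, hab] at h1
    have h2 : lmap (a - b) = 1 := by
      have h3 : lmap (a - b) * lmap b = 1 * lmap b := by rw [← h1, one_mul]
      exact mul_right_cancel h3
    have h4 := hlker _ h2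
    rwa [sub_eq_zero] at h4
  -- rank of S'
  have hrankS' : HasRank S' r := by
    constructor
    · -- generating set of size r
      refine ⟨insert p (Finset.image s (Finset.univ.erase i0)), ?_, ?_⟩
      · rw [Finset.coe_insert, Finset.coe_image, Finset.coe_erase, Finset.coe_univ, hS']
        congr 1
        rw [Set.insert_eq]
        congr 1
        congr 1
        ext i
        simp
      · have hpnot : p ∉ Finset.image s (Finset.univ.erase i0) := by
          intro hmem
          obtain ⟨i, hi, hpi⟩ := Finset.mem_image.mp hmem
          apply hps0
          rw [← hpi]
          exact hscomm i i0
        rw [Finset.card_insert_of_notMem hpnot,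
          Finset.card_image_of_injective _ hsinj,
          Finset.card_erase_of_mem (Finset.mem_univ i0), Finset.card_univ, Fintype.card_fin]
        omega
    · -- lower bound
      intro T' hT'
      have hT'sub : ∀ g ∈ T', g ∈ S' := fun g hg =>
        hT' ▸ Subgroup.subset_closure hg
      set F : ({g // g ∈ T'} → ZMod 2) → ↥S' :=
        fun e => ∏ g : {g // g ∈ T'}, (⟨g.1, hT'sub g.1 g.2⟩ : ↥S') ^ (e g).val with hFdef
      have hFadd : ∀ e1 e2, F (e1 + e2) = F e1 * F e2 := by
        intro e1 e2
        rw [hFdef]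
        simp only []
        rw [← Finset.prod_mul_distrib]
        apply Finset.prod_congr rfl
        intro g _
        exact zmod2_pow_add (hsq' _) (e1 g) (e2 g)
      have hFsurj : ∀ x : ↥S', ∃ e, F e = x := by
        intro x
        have hx2 : (x : (PMat (Fin n))ˣ) ∈ Subgroup.closure (T' : Set (PMat (Fin n))ˣ) := by
          rw [hT']; exact x.2
        have main : ∀ g (_ : g ∈ Subgroup.closure (T' : Set (PMat (Fin n))ˣ)),
            ∃ e, ((F e) : (PMat (Fin n))ˣ) = g := by
          intro g hg
          induction hg using Subgroup.closure_induction with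
          | mem y hy =>
            have hy' : y ∈ T' := hy
            refine ⟨fun g => if g.1 = y then 1 else 0, ?_⟩
            have : F (fun g => if g.1 = y then 1 else 0) =
                (⟨y, hT'sub y hy'⟩ : ↥S') := by
              rw [hFdef]
              simp only []
              rw [Fintype.prod_eq_single (⟨y, hy'⟩ : {g // g ∈ T'})]
              · rw [show ((if (⟨y, hy'⟩ : {g // g ∈ T'}).1 = y then (1 : ZMod 2) else 0)) = 1
                  from if_pos rfl]
                rw [show ((1 : ZMod 2)).val = 1 by decide, pow_one]
              · intro x hxy
                rw [if_neg (fun h => hxy (Subtype.ext h))]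
                simp
            rw [this]
          | one => exact ⟨0, by rw [hFdef]; simp⟩
          | mul a b _ _ ha hb =>
            obtain ⟨e1, he1⟩ := ha
            obtain ⟨e2, he2⟩ := hb
            exact ⟨e1 + e2, by rw [hFadd]; push_cast [he1, he2]; rfl⟩
          | inv a ha' ha =>
            obtain ⟨e, he⟩ := ha
            refine ⟨e, ?_⟩
            have haS' : a ∈ S' := by rw [← hT']; exact ha'
            have : a⁻¹ = a := inv_eq_of_mul_eq_one_left (stab_sq _ hstabS' haS')
            rw [this, he]
        obtain ⟨e, he⟩ := main x hx2
        exact ⟨e, Subtype.ext he⟩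
      -- counting
      have hcard : (2 : ℕ) ^ r ≤ 2 ^ T'.card := by
        have hJdef : ∀ a, F (Function.invFun F (lmap a)) = lmap a :=
          fun a => Function.invFun_eq (hFsurj (lmap a))
        have hJinj : Function.Injective (fun a => Function.invFun F (lmap a)) := by
          intro a b hab
          apply hlinj
          rw [← hJdef a, ← hJdef b]
          simp only [hab]
        calc (2 : ℕ) ^ r = Fintype.card (Fin r → ZMod 2) := by
              rw [Fintype.card_fun, ZMod.card, Fintype.card_fin]
          _ ≤ Fintype.card ({g // g ∈ T'} → ZMod 2) :=
              Fintype.card_le_of_injective _ hJinj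
          _ = 2 ^ T'.card := by
              rw [Fintype.card_fun, ZMod.card, Fintype.card_coe]
      exact (Nat.pow_le_pow_iff_right (by norm_num)).mp hcard
  -- centralizing criteria
  have hcentS' : ∀ g : (PMat (Fin n))ˣ, Commute g p → (∀ i, i ≠ i0 → Commute g (s i)) →
      ∀ t ∈ S', Commute g t := by
    intro g h1 h2 t ht
    have hle : S' ≤ Subgroup.centralizer {g} := by
      rw [hS']
      apply (Subgroup.closure_le _).mpr
      rintro y (hy | ⟨i, hi, rfl⟩)
      · rw [Set.mem_singleton_iff] at hy; rw [hy]
        rw [SetLike.mem_coe, Subgroup.mem_centralizer_iff]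
        intro a ha; rw [Set.mem_singleton_iff] at ha; subst ha
        exact h1.eq
      · rw [SetLike.mem_coe, Subgroup.mem_centralizer_iff]
        intro a ha; rw [Set.mem_singleton_iff] at ha; subst ha
        exact (h2 i hi).eq
    have hmem := hle ht
    rw [Subgroup.mem_centralizer_iff] at hmem
    exact hmem g rfl
  have hcentS : ∀ g : (PMat (Fin n))ˣ, (∀ i, Commute g (s i)) → ∀ t ∈ S, Commute g t := by
    intro g h1 t ht
    have hle : S ≤ Subgroup.centralizer {g} := by
      rw [← hgen]
      apply (Subgroup.closure_le _).mpr
      rintro y ⟨i, rfl⟩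
      rw [SetLike.mem_coe, Subgroup.mem_centralizer_iff]
      intro a ha; rw [Set.mem_singleton_iff] at ha; subst ha
      exact (h1 i).eq
    have hmem := hle ht
    rw [Subgroup.mem_centralizer_iff] at hmem
    exact hmem g rfl
  -- the representatives normalize S'
  have hxiS : ∀ j i, Commute (x j) (s i) :=
    fun j i => ((mem_normIn_iff _ hS).mp (hx j)).2 _ (hsiS i)
  have hziS : ∀ j i, Commute (z j) (s i) :=
    fun j i => ((mem_normIn_iff _ hS).mp (hz j)).2 _ (hsiS i)
  have hx' : ∀ j, x j ∈ NormIn (Fin n) S' := fun j =>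
    (mem_normIn_iff _ hstabS').mpr ⟨((mem_normIn_iff _ hS).mp (hx j)).1,
      hcentS' _ (hxp j) (fun i _ => hxiS j i)⟩
  have hz' : ∀ j, z j ∈ NormIn (Fin n) S' := fun j =>
    (mem_normIn_iff _ hstabS').mpr ⟨((mem_normIn_iff _ hS).mp (hz j)).1,
      hcentS' _ (hzp j) (fun i _ => hziS j i)⟩
  -- abbreviations for N(S')
  have hN'P : ∀ g : ↥(NormIn (Fin n) S'), (g : (PMat (Fin n))ˣ) ∈ PauliGroup (Fin n) :=
    fun g => ((mem_normIn_iff _ hstabS').mp g.2).1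
  have hN'p : ∀ g : ↥(NormIn (Fin n) S'), Commute (g : (PMat (Fin n))ˣ) p :=
    fun g => ((mem_normIn_iff _ hstabS').mp g.2).2 p hpS'
  have hN'si : ∀ g : ↥(NormIn (Fin n) S'), ∀ i, i ≠ i0 → Commute (g : (PMat (Fin n))ˣ) (s i) :=
    fun g i hi => ((mem_normIn_iff _ hstabS').mp g.2).2 _ (hsS' i hi)
  have hSleN : S ≤ NormIn (Fin n) S := fun t ht =>
    (mem_normIn_iff _ hS).mpr ⟨hS.le ht, fun t' ht' => stab_comm _ hS ht ht'⟩
  -- case distinction data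
  have pf1 : ∀ (g : ↥(NormIn (Fin n) S')), Commute (g : (PMat (Fin n))ˣ) (s i0) →
      (g : (PMat (Fin n))ˣ) ∈ NormIn (Fin n) S := by
    intro g hcg
    apply (mem_normIn_iff _ hS).mpr
    refine ⟨hN'P g, hcentS _ (fun i => ?_)⟩
    rcases eq_or_ne i i0 with rfl | hi
    · exact hcg
    · exact hN'si g i hi
  have anti_of_not : ∀ a : (PMat (Fin n))ˣ, a ∈ PauliGroup (Fin n) →
      ¬ Commute a (s i0) → a * s i0 = -(s i0 * a) := by
    intro a ha hna
    rcases pauli_comm_or_anticomm _ ha (hS.le (hsiS i0)) with h | h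
    · exact absurd h hna
    · exact h
  have anti_mul : ∀ a b : (PMat (Fin n))ˣ, a * s i0 = -(s i0 * a) →
      b * s i0 = -(s i0 * b) → Commute (a * b) (s i0) := by
    intro a b ha hb
    show (a * b) * s i0 = s i0 * (a * b)
    calc (a * b) * s i0 = a * (b * s i0) := by rw [mul_assoc]
      _ = a * (-(s i0 * b)) := by rw [hb]
      _ = -((a * s i0) * b) := by rw [mul_neg, mul_assoc]
      _ = -((-(s i0 * a)) * b) := by rw [ha]
      _ = (s i0 * a) * b := by rw [neg_mul, neg_neg]
      _ = s i0 * (a * b) := by rw [mul_assoc]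
  have pf2 : ∀ (g : ↥(NormIn (Fin n) S')), ¬ Commute (g : (PMat (Fin n))ˣ) (s i0) →
      (g : (PMat (Fin n))ˣ) * p ∈ NormIn (Fin n) S := by
    intro g hng
    apply (mem_normIn_iff _ hS).mpr
    refine ⟨mul_mem (hN'P g) hp, hcentS _ (fun i => ?_)⟩
    rcases eq_or_ne i i0 with rfl | hi
    · exact anti_mul _ _ (anti_of_not _ (hN'P g) hng) hanti
    · exact (hN'si g i hi).mul_left (hcomm i hi)
  -- the underlying function of the quotient isomorphism
  set f : ↥(NormIn (Fin n) S') → ↥(PauliGroup (Fin k)) := fun g =>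
    if hc : Commute (g : (PMat (Fin n))ˣ) (s i0) then
      φ (QuotientGroup.mk ⟨(g : (PMat (Fin n))ˣ), pf1 g hc⟩)
    else
      φ (QuotientGroup.mk ⟨(g : (PMat (Fin n))ˣ) * p, pf2 g hc⟩) with hfdef
  have fpos : ∀ (g : ↥(NormIn (Fin n) S')) (hc : Commute (g : (PMat (Fin n))ˣ) (s i0)),
      f g = φ (QuotientGroup.mk ⟨(g : (PMat (Fin n))ˣ), pf1 g hc⟩) := by
    intro g hc
    rw [hfdef]
    simp only [dif_pos hc]
  have fneg : ∀ (g : ↥(NormIn (Fin n) S')) (hc : ¬ Commute (g : (PMat (Fin n))ˣ) (s i0)),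
      f g = φ (QuotientGroup.mk ⟨(g : (PMat (Fin n))ˣ) * p, pf2 g hc⟩) := by
    intro g hc
    rw [hfdef]
    simp only [dif_neg hc]
  have mkcongr : ∀ (a b : ↥(NormIn (Fin n) S)), (a : (PMat (Fin n))ˣ) = b →
      (QuotientGroup.mk a : LogicalGroup (Fin n) S) = QuotientGroup.mk b :=
    fun a b h => by rw [Subtype.ext h]
  -- multiplicativity
  have fmul : ∀ a b : ↥(NormIn (Fin n) S'), f (a * b) = f a * f b := by
    intro a b
    have hab : ((a * b : ↥(NormIn (Fin n) S')) : (PMat (Fin n))ˣ) =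
        (a : (PMat (Fin n))ˣ) * b := rfl
    by_cases hca : Commute (a : (PMat (Fin n))ˣ) (s i0) <;>
      by_cases hcb : Commute (b : (PMat (Fin n))ˣ) (s i0)
    · have hcab : Commute ((a * b : ↥(NormIn (Fin n) S')) : (PMat (Fin n))ˣ) (s i0) :=
        hca.mul_left hcb
      rw [fpos _ hcab, fpos _ hca, fpos _ hcb, ← _root_.map_mul, ← QuotientGroup.mk_mul]
      exact congrArg φ (mkcongr _ _ rfl)
    · have hcab : ¬ Commute ((a * b : ↥(NormIn (Fin n) S')) : (PMat (Fin n))ˣ) (s i0) := by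
        intro h
        rw [hab] at h
        apply hcb
        have h2 := (hca.inv_left).mul_left h
        rwa [inv_mul_cancel_left] at h2
      rw [fneg _ hcab, fpos _ hca, fneg _ hcb, ← _root_.map_mul, ← QuotientGroup.mk_mul]
      exact congrArg φ (mkcongr _ _ (mul_assoc _ _ _))
    · have hcab : ¬ Commute ((a * b : ↥(NormIn (Fin n) S')) : (PMat (Fin n))ˣ) (s i0) := by
        intro h
        rw [hab] at h
        apply hca
        have h2 := h.mul_left hcb.inv_left
        rwa [mul_inv_cancel_right] at h2
      rw [fneg _ hcab, fneg _ hca, fpos _ hcb, ← _root_.map_mul, ← QuotientGroup.mk_mul]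
      refine congrArg φ (mkcongr _ _ ?_)
      show ((a : (PMat (Fin n))ˣ) * b) * p = ((a : (PMat (Fin n))ˣ) * p) * b
      calc ((a : (PMat (Fin n))ˣ) * b) * p = (a : (PMat (Fin n))ˣ) * ((b : (PMat (Fin n))ˣ) * p) :=
            mul_assoc _ _ _
        _ = (a : (PMat (Fin n))ˣ) * (p * b) := by rw [(hN'p b).eq]
        _ = ((a : (PMat (Fin n))ˣ) * p) * b := (mul_assoc _ _ _).symm
    · have hcab : Commute ((a * b : ↥(NormIn (Fin n) S')) : (PMat (Fin n))ˣ) (s i0) :=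
        anti_mul _ _ (anti_of_not _ (hN'P a) hca) (anti_of_not _ (hN'P b) hcb)
      rw [fpos _ hcab, fneg _ hca, fneg _ hcb, ← _root_.map_mul, ← QuotientGroup.mk_mul]
      refine congrArg φ (mkcongr _ _ ?_)
      show ((a : (PMat (Fin n))ˣ) * b) = ((a : (PMat (Fin n))ˣ) * p) * ((b : (PMat (Fin n))ˣ) * p)
      have hmid : p * ((b : (PMat (Fin n))ˣ) * p) = b := by
        rw [← mul_assoc, ← (hN'p b).eq, mul_assoc, hpp, mul_one]
      calc ((a : (PMat (Fin n))ˣ) * b) = (a : (PMat (Fin n))ˣ) * (p * ((b : (PMat (Fin n))ˣ) * p)) := by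
            rw [hmid]
        _ = ((a : (PMat (Fin n))ˣ) * p) * ((b : (PMat (Fin n))ˣ) * p) := (mul_assoc _ _ _).symm
  set Φ : ↥(NormIn (Fin n) S') →* ↥(PauliGroup (Fin k)) := MonoidHom.mk' f fmul with hΦdef
  have hΦapp : ∀ g, Φ g = f g := fun g => rfl
  -- Φ kills S'
  have hΦker : ∀ g : ↥(NormIn (Fin n) S'), g ∈ S'.subgroupOf (NormIn (Fin n) S') → Φ g = 1 := by
    intro g hg
    rw [Subgroup.mem_subgroupOf] at hg
    rcases hS'dec _ hg with hgT | ⟨u, hu, hval⟩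
    · have hc : Commute (g : (PMat (Fin n))ˣ) (s i0) := stab_comm _ hS (hTS hgT) (hsiS i0)
      rw [hΦapp, fpos g hc]
      have h1 : (QuotientGroup.mk (⟨(g : (PMat (Fin n))ˣ), pf1 g hc⟩ : ↥(NormIn (Fin n) S)) :
          LogicalGroup (Fin n) S) = 1 :=
        (QuotientGroup.eq_one_iff _).mpr (Subgroup.mem_subgroupOf.mpr (hTS hgT))
      rw [h1, _root_.map_one]
    · have hanti_g : (g : (PMat (Fin n))ˣ) * s i0 = -(s i0 * (g : (PMat (Fin n))ˣ)) := by
        rw [hval]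
        calc (p * u) * s i0 = p * (u * s i0) := mul_assoc _ _ _
          _ = p * (s i0 * u) := by rw [← (hs0T u hu).eq]
          _ = (p * s i0) * u := (mul_assoc _ _ _).symm
          _ = (-(s i0 * p)) * u := by rw [hanti]
          _ = -(s i0 * (p * u)) := by rw [neg_mul, mul_assoc]
      have hnc := anticomm_not_comm _ hanti_g
      rw [hΦapp, fneg g hnc]
      have hval2 : (g : (PMat (Fin n))ˣ) * p = u := by
        rw [hval, mul_assoc, ← (hpT u hu).eq, ← mul_assoc, hpp, one_mul]
      have h1 : (QuotientGroup.mk (⟨(g : (PMat (Fin n))ˣ) * p, pf2 g hnc⟩ :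
          ↥(NormIn (Fin n) S)) : LogicalGroup (Fin n) S) =
          QuotientGroup.mk ⟨u, hSleN (hTS hu)⟩ := mkcongr _ _ hval2
      rw [h1]
      have h2 : (QuotientGroup.mk (⟨u, hSleN (hTS hu)⟩ : ↥(NormIn (Fin n) S)) :
          LogicalGroup (Fin n) S) = 1 :=
        (QuotientGroup.eq_one_iff _).mpr (Subgroup.mem_subgroupOf.mpr (hTS hu))
      rw [h2, _root_.map_one]
  -- the induced map on the quotient
  set ψ0 : LogicalGroup (Fin n) S' →* ↥(PauliGroup (Fin k)) :=
    QuotientGroup.lift (S'.subgroupOf (NormIn (Fin n) S')) Φ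
      (fun g hg => MonoidHom.mem_ker.mpr (hΦker g hg)) with hψ0def
  have hψ0mk : ∀ g : ↥(NormIn (Fin n) S'), ψ0 (QuotientGroup.mk g) = Φ g := fun g => rfl
  -- injectivity
  have hψ0inj : Function.Injective ψ0 := by
    rw [injective_iff_map_eq_one]
    intro q hq
    obtain ⟨g, rfl⟩ := QuotientGroup.mk'_surjective (S'.subgroupOf (NormIn (Fin n) S')) q
    rw [QuotientGroup.mk'_apply] at hq ⊢
    rw [hψ0mk] at hq
    rw [QuotientGroup.eq_one_iff]
    by_cases hc : Commute (g : (PMat (Fin n))ˣ) (s i0)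
    · rw [hΦapp, fpos g hc] at hq
      have h1 : (QuotientGroup.mk (⟨(g : (PMat (Fin n))ˣ), pf1 g hc⟩ : ↥(NormIn (Fin n) S)) :
          LogicalGroup (Fin n) S) = 1 := by
        apply φ.injective
        rw [hq, _root_.map_one]
      have h2' : (⟨(g : (PMat (Fin n))ˣ), pf1 g hc⟩ : ↥(NormIn (Fin n) S)) ∈
          S.subgroupOf (NormIn (Fin n) S) := (QuotientGroup.eq_one_iff _).mp h1
      have h2 : (g : (PMat (Fin n))ˣ) ∈ S := Subgroup.mem_subgroupOf.mp h2'
      have h3 : (g : (PMat (Fin n))ˣ) ∈ T := hTp _ h2 (hN'p g).symm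
      exact Subgroup.mem_subgroupOf.mpr (hTleS' h3)
    · rw [hΦapp, fneg g hc] at hq
      have h1 : (QuotientGroup.mk (⟨(g : (PMat (Fin n))ˣ) * p, pf2 g hc⟩ :
          ↥(NormIn (Fin n) S)) : LogicalGroup (Fin n) S) = 1 := by
        apply φ.injective
        rw [hq, _root_.map_one]
      have h2' : (⟨(g : (PMat (Fin n))ˣ) * p, pf2 g hc⟩ : ↥(NormIn (Fin n) S)) ∈
          S.subgroupOf (NormIn (Fin n) S) := (QuotientGroup.eq_one_iff _).mp h1
      have h2 : (g : (PMat (Fin n))ˣ) * p ∈ S := Subgroup.mem_subgroupOf.mp h2'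
      have h3 : Commute p ((g : (PMat (Fin n))ˣ) * p) :=
        ((hN'p g).symm).mul_right (Commute.refl p)
      have h4 : (g : (PMat (Fin n))ˣ) * p ∈ T := hTp _ h2 h3
      have h5 : (g : (PMat (Fin n))ˣ) = ((g : (PMat (Fin n))ˣ) * p) * p := by
        rw [mul_assoc, hpp, mul_one]
      apply Subgroup.mem_subgroupOf.mpr
      show (g : (PMat (Fin n))ˣ) ∈ S'
      rw [h5]
      exact mul_mem (hTleS' h4) hpS'
  -- values on the distinguished elements
  have hiUN' : iU (Fin n) ∈ NormIn (Fin n) S' := iU_mem_normIn (Fin n) S'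
  have hciU : Commute ((⟨iU (Fin n), hiUN'⟩ : ↥(NormIn (Fin n) S')) : (PMat (Fin n))ˣ) (s i0) :=
    iU_central (Fin n) (s i0)
  have hψi : ψ0 (QuotientGroup.mk ⟨iU (Fin n), hiUN'⟩) = ⟨iU (Fin k), iU_mem (Fin k)⟩ := by
    rw [hψ0mk, hΦapp, fpos _ hciU]
    exact hφi
  have hcx : ∀ j, Commute ((⟨x j, hx' j⟩ : ↥(NormIn (Fin n) S')) : (PMat (Fin n))ˣ) (s i0) :=
    fun j => hxiS j i0
  have hcz : ∀ j, Commute ((⟨z j, hz' j⟩ : ↥(NormIn (Fin n) S')) : (PMat (Fin n))ˣ) (s i0) :=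
    fun j => hziS j i0
  have hψx : ∀ j, ψ0 (QuotientGroup.mk ⟨x j, hx' j⟩) = ⟨XU (Fin k) j, XU_mem (Fin k) j⟩ := by
    intro j
    rw [hψ0mk, hΦapp, fpos _ (hcx j)]
    exact hφx j
  have hψz : ∀ j, ψ0 (QuotientGroup.mk ⟨z j, hz' j⟩) = ⟨ZU (Fin k) j, ZU_mem (Fin k) j⟩ := by
    intro j
    rw [hψ0mk, hΦapp, fpos _ (hcz j)]
    exact hφz j
  -- surjectivity
  have htopk : Subgroup.closure
      (Subtype.val ⁻¹' (pauliGens (Fin k)) : Set ↥(PauliGroup (Fin k))) = ⊤ :=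
    Subgroup.closure_closure_coe_preimage
  have hrange : ∀ y : ↥(PauliGroup (Fin k)),
      (y : (PMat (Fin k))ˣ) ∈ pauliGens (Fin k) → y ∈ ψ0.range := by
    rintro ⟨y, hy⟩ hy2
    rcases hy2 with (hy3 | ⟨j, hj⟩) | ⟨j, hj⟩
    · rw [Set.mem_singleton_iff] at hy3
      exact ⟨QuotientGroup.mk ⟨iU (Fin n), hiUN'⟩, by rw [hψi]; exact Subtype.ext hy3.symm⟩
    · exact ⟨QuotientGroup.mk ⟨x j, hx' j⟩, by rw [hψx j]; exact Subtype.ext hj⟩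
    · exact ⟨QuotientGroup.mk ⟨z j, hz' j⟩, by rw [hψz j]; exact Subtype.ext hj⟩
  have hψ0surj : Function.Surjective ψ0 := by
    have hrt : ψ0.range = ⊤ := by
      rw [eq_top_iff, ← htopk]
      apply (Subgroup.closure_le _).mpr
      rintro y hy
      exact hrange y hy
    intro y
    have : y ∈ ψ0.range := by rw [hrt]; trivial
    exact this
  -- the isomorphism
  refine ⟨hstabS', hrankS', hx', hz', ?_, ?_⟩
  · -- the cosets generate
    have hmapcl : Subgroup.map ψ0 (Subgroup.closure
        (({QuotientGroup.mk ⟨iU (Fin n), iU_mem_normIn (Fin n) S'⟩} ∪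
          Set.range (fun j => QuotientGroup.mk ⟨x j, hx' j⟩) ∪
          Set.range (fun j => QuotientGroup.mk ⟨z j, hz' j⟩) :
            Set (LogicalGroup (Fin n) S')))) =
        Subgroup.closure (ψ0 '' _) := MonoidHom.map_closure ψ0 _
    have himg : ψ0 '' (({QuotientGroup.mk ⟨iU (Fin n), iU_mem_normIn (Fin n) S'⟩} ∪
          Set.range (fun j => QuotientGroup.mk ⟨x j, hx' j⟩) ∪
          Set.range (fun j => QuotientGroup.mk ⟨z j, hz' j⟩) :
            Set (LogicalGroup (Fin n) S'))) =
        (Subtype.val ⁻¹' (pauliGens (Fin k)) : Set ↥(PauliGroup (Fin k))) := by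
      apply Set.eq_of_subset_of_subset
      · rintro y ⟨q, (hq | ⟨j, hj⟩) | ⟨j, hj⟩, rfl⟩
        · rw [Set.mem_singleton_iff] at hq
          rw [hq, hψi]
          exact Or.inl (Or.inl rfl)
        · rw [← hj, hψx j]
          exact Or.inl (Or.inr ⟨j, rfl⟩)
        · rw [← hj, hψz j]
          exact Or.inr ⟨j, rfl⟩
      · rintro ⟨y, hy⟩ ((hy3 | ⟨j, hj⟩) | ⟨j, hj⟩)
        · rw [Set.mem_singleton_iff] at hy3
          exact ⟨QuotientGroup.mk ⟨iU (Fin n), hiUN'⟩, Or.inl (Or.inl rfl),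
            by rw [hψi]; exact Subtype.ext hy3.symm⟩
        · exact ⟨QuotientGroup.mk ⟨x j, hx' j⟩, Or.inl (Or.inr ⟨j, rfl⟩),
            by rw [hψx j]; exact Subtype.ext hj⟩
        · exact ⟨QuotientGroup.mk ⟨z j, hz' j⟩, Or.inr ⟨j, rfl⟩,
            by rw [hψz j]; exact Subtype.ext hj⟩
    apply Subgroup.map_injective hψ0inj
    rw [hmapcl, himg, htopk, Subgroup.map_top_of_surjective ψ0 hψ0surj]
  · -- the isomorphism with the correct values
    refine ⟨MulEquiv.ofBijective ψ0 ⟨hψ0inj, hψ0surj⟩, ?_, ?_, ?_⟩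
    · exact hψi
    · exact hψx
    · exact hψz

end
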